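/- For a composition s = (s_1,...,s_n) of positive integers, the set of Stirling s-permutations is in bijection with the set of s-decreasing trees. In particular, the number of Stirling s-permutations equals ∏_{i=1}^{n-1} (1 + s_{n-i+1} + s_{n-i+2} + ··· + s_n). -/

import Mathlib

/-!
Both sets are built by adding the labels `n, n - 1, …, 1` one at a time. In a 121-avoiding word
whose letters are all `≥ a`, the occurrences of `a` form one contiguous block, and deleting it
leaves a 121-avoiding word; conversely the block `a^{s_a}` may be inserted into any of the
`1 + s_{a+1} + ⋯ + s_n` gaps of a Stirling word on `a + 1, …, n`. Dually, in an `s`-decreasing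
tree on `a, …, n` the node `a` has only leaves as children, so pruning it to a leaf gives a tree
on `a + 1, …, n`, and any of the `1 + s_{a+1} + ⋯ + s_n` leaves of such a tree may be grafted
with a node `a`. Hence both sets are in bijection with `Fin (∏_{a=1}^{n} (1 + s_{a+1} + ⋯ + s_n))`.
-/

namespace SPermutahedron

/-! ### Planar rooted trees and `s`-decreasing trees -/

/-- A planar rooted tree: either a leaf, or an internal node with a natural
number label and an ordered list of children. -/
inductive PTree where
  | leaf : PTree
  | node : ℕ → List PTree → PTree

mutual
  /-- The list of labels of the internal nodes of a planar tree. -/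
  def labels : PTree → List ℕ
    | .leaf => []
    | .node i cs => i :: labelsList cs
  def labelsList : List PTree → List ℕ
    | [] => []
    | t :: ts => labels t ++ labelsList ts
end

mutual
  /-- Local condition for an `s`-decreasing tree: node `i` has `s i + 1`
  children and every internal-node descendant of `i` has a label `< i`. -/
  def IsSDecAux (s : ℕ → ℕ) : PTree → Prop
    | .leaf => True
    | .node i cs => cs.length = s i + 1 ∧ (∀ j ∈ labelsList cs, j < i) ∧ IsSDecList s cs
  def IsSDecList (s : ℕ → ℕ) : List PTree → Prop
    | [] => True
    | t :: ts => IsSDecAux s t ∧ IsSDecList s ts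
end

/-- `T` is an `s`-decreasing tree on `n` internal nodes: its internal nodes are
labeled bijectively by `1, …, n`, node `i` has `s i + 1` children, and any
internal-node descendant `j` of a node `i` satisfies `j < i`. -/
def IsSDecTree (s : ℕ → ℕ) (n : ℕ) (T : PTree) : Prop :=
  IsSDecAux s T ∧ (labels T).Perm (List.range' 1 n)

/-! ### Stirling `s`-permutations -/

/-- A word avoids the pattern `121`: there is never a letter `j` strictly in
between two occurrences of a letter `i` with `i < j`. -/
def Avoids121 (w : List ℕ) : Prop :=
  ¬ ∃ (u₁ u₂ u₃ u₄ : List ℕ) (i j : ℕ), i < j ∧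
      w = u₁ ++ i :: u₂ ++ j :: u₃ ++ i :: u₄

/-- A Stirling `s`-permutation: a permutation of the word `1^{s 1} 2^{s 2} ⋯ n^{s n}`
avoiding the pattern `121`. -/
def IsStirling (s : ℕ → ℕ) (n : ℕ) (w : List ℕ) : Prop :=
  (∀ x ∈ w, 1 ≤ x ∧ x ≤ n) ∧ (∀ i, 1 ≤ i → i ≤ n → w.count i = s i) ∧ Avoids121 w

/-- `(a, c)` is an ascent of `w`: `a < c` and `ac` is a consecutive substring. -/
def WordAscent (w : List ℕ) (a c : ℕ) : Prop :=
  a < c ∧ ∃ u v, w = u ++ a :: c :: v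

/-- `(a, c)` is a descent of `w`: `a < c` and `ca` is a consecutive substring. -/
def WordDescent (w : List ℕ) (a c : ℕ) : Prop :=
  a < c ∧ ∃ u v, w = u ++ c :: a :: v

/-- The inversion multiplicity `#_w(c, a)`: the number of occurrences of `c`
preceding the `a`-block of `w` (i.e. preceding the first occurrence of `a`). -/
def invW (w : List ℕ) (c a : ℕ) : ℕ := (w.takeWhile (fun x => decide (x ≠ a))).count c

end SPermutahedron

theorem nonempty_equiv_fin_prod_Ico {α : ℕ → Type*} (m : ℕ → ℕ) {lo N : ℕ} (hlo : lo ≤ N)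
    (top : α N ≃ Unit) (step : ∀ a, lo ≤ a → a < N → Nonempty (Fin (m a) × α (a + 1) ≃ α a)) :
    Nonempty (α lo ≃ Fin (∏ i ∈ Finset.Ico lo N, m i)) := by
  refine Nat.decreasingInduction' (fun a haN hla ih => ?_) hlo
    (by simpa using ⟨top.trans finOneEquiv.symm⟩)
  obtain ⟨e⟩ := step a hla haN
  obtain ⟨e'⟩ := ih
  rw [Finset.prod_eq_prod_Ico_succ_bot haN]
  exact ⟨e.symm.trans ((Equiv.prodCongr (.refl _) e').trans finProdFinEquiv)⟩

namespace List

theorem triple_sublist_iff {α : Type*} {x y z : α} {w : List α} :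
    [x, y, z] <+ w ↔ ∃ u₁ u₂ u₃ u₄, w = u₁ ++ x :: u₂ ++ y :: u₃ ++ z :: u₄ := by
  refine ⟨fun h => ?_, fun ⟨u₁, u₂, u₃, u₄, hw⟩ => by simp [hw]⟩
  obtain ⟨_, _, rfl, hx, hyz⟩ := cons_sublist_iff.1 h
  obtain ⟨_, _, rfl, hy, hz⟩ := cons_sublist_iff.1 hyz
  obtain ⟨u₁, u₂, rfl⟩ := append_of_mem hx
  obtain ⟨u₃, u₄, rfl⟩ := append_of_mem hy
  obtain ⟨u₅, u₆, rfl⟩ := append_of_mem (singleton_sublist.1 hz)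
  exact ⟨u₁, u₂ ++ u₃, u₄ ++ u₅, u₆, by simp⟩

theorem Sublist.of_cons_sublist_append_of_notMem {α : Type*} {x : α} {l u m : List α}
    (h : x :: l <+ u ++ m) (hx : x ∉ u) : x :: l <+ m := by
  induction u with
  | nil => exact h
  | cons y u ih =>
    rcases sublist_cons_iff.1 h with h | ⟨r, hr, -⟩
    · exact ih h (fun hu => hx (mem_cons_of_mem y hu))
    · exact absurd ((cons_eq_cons.1 hr).1 ▸ mem_cons_self) hx

theorem filter_ne_eq_self_of_notMem {α : Type*} [DecidableEq α] {a : α} {u : List α}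
    (hu : a ∉ u) : u.filter (· ≠ a) = u :=
  filter_eq_self.2 fun _ hx => by simpa using ne_of_mem_of_not_mem hx hu

end List

namespace SPermutahedron

open List

theorem avoids121_iff_forall_not_sublist {w : List ℕ} :
    Avoids121 w ↔ ∀ i j, i < j → ¬ [i, j, i] <+ w := by
  simp only [Avoids121, triple_sublist_iff]
  grind

theorem Avoids121.sublist {w w' : List ℕ} (h : Avoids121 w) (hw' : w' <+ w) : Avoids121 w' := by
  rw [avoids121_iff_forall_not_sublist] at *
  exact fun i j hij hs => h i j hij (hs.trans hw')

/-- The number of gaps of a word on `a + 1, …, n` with letter multiplicities `s`, and the number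
of leaves of an `s`-decreasing tree on `a + 1, …, n`. -/
def numSlots (s : ℕ → ℕ) (n a : ℕ) : ℕ := 1 + ∑ i ∈ Finset.Icc (a + 1) n, s i

section Words

variable {a : ℕ} {u v w : List ℕ}

theorem filter_ne_append_replicate_append (hu : a ∉ u) (hv : a ∉ v) (k : ℕ) :
    (u ++ replicate k a ++ v).filter (· ≠ a) = u ++ v := by
  rw [filter_append, filter_append, filter_ne_eq_self_of_notMem hu, filter_ne_eq_self_of_notMem hv]
  simp

theorem idxOf_append_replicate_append (hu : a ∉ u) {k : ℕ} (hk : k ≠ 0) :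
    (u ++ replicate k a ++ v).idxOf a = u.length := by
  obtain ⟨k, rfl⟩ := Nat.exists_eq_add_one_of_ne_zero hk
  simp [idxOf_append_of_notMem hu, replicate_succ]

def insertBlock (a k : ℕ) (w : List ℕ) (p : ℕ) : List ℕ := w.take p ++ replicate k a ++ w.drop p

theorem filter_ne_insertBlock (hw : a ∉ w) (k p : ℕ) :
    (insertBlock a k w p).filter (· ≠ a) = w := by
  rw [insertBlock, filter_ne_append_replicate_append (fun h => hw (take_subset _ _ h))
    (fun h => hw (drop_subset _ _ h)), take_append_drop]

theorem idxOf_insertBlock (hw : a ∉ w) {p k : ℕ} (hp : p ≤ w.length) (hk : k ≠ 0) :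
    (insertBlock a k w p).idxOf a = p := by
  rw [insertBlock, idxOf_append_replicate_append (fun h => hw (take_subset _ _ h)) hk,
    length_take_of_le hp]

theorem Avoids121.exists_eq_append_replicate_append (hw : Avoids121 w) (ha : ∀ x ∈ w, a ≤ x) :
    ∃ u v, a ∉ u ∧ a ∉ v ∧ w = u ++ replicate (w.count a) a ++ v := by
  suffices ∃ u v k, a ∉ u ∧ a ∉ v ∧ w = u ++ replicate k a ++ v by
    obtain ⟨u, v, k, hu, hv, rfl⟩ := this
    exact ⟨u, v, hu, hv, by simp [count_eq_zero.2 hu, count_eq_zero.2 hv]⟩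
  induction w with
  | nil => exact ⟨[], [], 0, by simp⟩
  | cons x w ih =>
    obtain ⟨u, v, k, hu, hv, rfl⟩ := ih (Avoids121.sublist hw (sublist_cons_self x _)) fun y hy =>
      ha y (mem_cons_of_mem x hy)
    by_cases hxa : x = a
    · subst hxa
      rcases u with _ | ⟨y, u⟩
      · exact ⟨[], v, k + 1, by simp, hv, by simp [replicate_succ]⟩
      rcases Nat.eq_zero_or_pos k with rfl | hk
      · exact ⟨[], y :: u ++ v, 1, by simp, by simpa [hv] using hu, by simp⟩
      -- otherwise `x y x` would occur in `x :: w`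
      have hyx : x < y := (ha y (by simp)).lt_of_ne (by rintro rfl; simp at hu)
      refine absurd ?_ ((avoids121_iff_forall_not_sublist.1 hw) x y hyx)
      have : [x] <+ u ++ replicate k x ++ v := singleton_sublist.2 (by simp [hk.ne'])
      simpa using (this.cons_cons y).cons_cons x
    · exact ⟨x :: u, v, k, by simp [Ne.symm hxa, hu], hv, by simp⟩

theorem Avoids121.append_replicate_append (huv : Avoids121 (u ++ v)) (ha : ∀ x ∈ u ++ v, a < x)
    (k : ℕ) : Avoids121 (u ++ replicate k a ++ v) := by
  have hu : a ∉ u := fun h => (ha a (mem_append_left v h)).false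
  have hv : a ∉ v := fun h => (ha a (mem_append_right u h)).false
  rw [avoids121_iff_forall_not_sublist] at *
  intro i j hij hsub
  by_cases hia : i = a
  · subst hia
    have h₁ : [i, j, i] <+ replicate k i ++ v :=
      (append_assoc u _ v ▸ hsub).of_cons_sublist_append_of_notMem hu
    have h₂ : [i, j, i] <+ replicate k i := by
      have h₁' : [i, j, i] <+ v.reverse ++ replicate k i := by
        simpa using reverse_sublist.2 h₁
      simpa using reverse_sublist.2 (h₁'.of_cons_sublist_append_of_notMem (by simpa using hv))
    exact hij.ne' (eq_of_mem_replicate (h₂.subset (by simp)))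
  · have hai : a < i := ha i (by simpa [hia] using hsub.subset (mem_cons_self (a := i)))
    have := hsub.filter (· ≠ a)
    rw [filter_ne_append_replicate_append hu hv] at this
    exact huv i j hij (by simpa [hia, (hai.trans hij).ne'] using this)

/-- Stirling words on the letters `a, …, n`; `IsStirling s n` is the case `a = 1`. -/
def IsStirlingFrom (s : ℕ → ℕ) (n a : ℕ) (w : List ℕ) : Prop :=
  (∀ x ∈ w, a ≤ x ∧ x ≤ n) ∧ (∀ i, a ≤ i → i ≤ n → w.count i = s i) ∧ Avoids121 w

variable {s : ℕ → ℕ} {n : ℕ}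

theorem isStirlingFrom_append_replicate_append_iff (han : a ≤ n) (hu : a ∉ u) (hv : a ∉ v) :
    IsStirlingFrom s n a (u ++ replicate (s a) a ++ v) ↔ IsStirlingFrom s n (a + 1) (u ++ v) := by
  have hsub : u ++ v <+ u ++ replicate (s a) a ++ v :=
    filter_ne_append_replicate_append hu hv _ ▸ filter_sublist
  constructor
  · rintro ⟨hrange, hcount, havoid⟩
    refine ⟨fun x hx => ?_, fun i hai hin => ?_, havoid.sublist hsub⟩
    · have hxa : x ≠ a := by rintro rfl; simp_all
      have := hrange x (hsub.subset hx)
      omega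
    · simpa [count_replicate, (show a ≠ i by omega)] using hcount i (by omega) hin
  · rintro ⟨hrange, hcount, havoid⟩
    refine ⟨fun x hx => ?_, fun i hai hin => ?_,
      havoid.append_replicate_append (fun x hx => (hrange x hx).1) _⟩
    · rcases eq_or_ne x a with rfl | hxa
      · exact ⟨le_rfl, han⟩
      · have := hrange x (by simpa [hxa] using hx)
        omega
    · rcases hai.eq_or_lt with rfl | hai
      · simp [count_eq_zero.2 hu, count_eq_zero.2 hv]
      · simpa [count_replicate, hai.ne] using hcount i hai hin

theorem IsStirlingFrom.length_eq (h : IsStirlingFrom s n a w) :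
    w.length = ∑ i ∈ Finset.Icc a n, s i := by
  rw [← Multiset.coe_card, ← Multiset.sum_count_eq_card (s := Finset.Icc a n)]
  · refine Finset.sum_congr rfl fun i hi => ?_
    rw [Multiset.coe_count]
    exact h.2.1 i (Finset.mem_Icc.1 hi).1 (Finset.mem_Icc.1 hi).2
  · exact fun x hx => Finset.mem_Icc.2 (h.1 x hx)

theorem isStirlingFrom_succ_iff : IsStirlingFrom s n (n + 1) w ↔ w = [] := by
  refine ⟨fun h => eq_nil_iff_forall_not_mem.2 fun x hx => ?_, ?_⟩
  · have := h.1 x hx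
    omega
  · rintro rfl
    exact ⟨by simp, fun i _ _ => by omega, by simp [Avoids121]⟩

theorem IsStirlingFrom.exists_eq_append_replicate_append (hw : IsStirlingFrom s n a w)
    (han : a ≤ n) : ∃ u v, a ∉ u ∧ a ∉ v ∧ w = u ++ replicate (s a) a ++ v := by
  rw [← hw.2.1 a le_rfl han]
  exact hw.2.2.exists_eq_append_replicate_append fun x hx => (hw.1 x hx).1

theorem IsStirlingFrom.notMem (hw : IsStirlingFrom s n (a + 1) w) : a ∉ w := fun h => by
  have := (hw.1 a h).1
  omega

theorem IsStirlingFrom.length_add_one (hw : IsStirlingFrom s n (a + 1) w) :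
    w.length + 1 = numSlots s n a := by
  rw [numSlots, hw.length_eq, add_comm]

theorem IsStirlingFrom.insertBlock (hw : IsStirlingFrom s n (a + 1) w) (han : a ≤ n) (p : ℕ) :
    IsStirlingFrom s n a (insertBlock a (s a) w p) :=
  (isStirlingFrom_append_replicate_append_iff han (fun h => hw.notMem (take_subset _ _ h))
    (fun h => hw.notMem (drop_subset _ _ h))).2 (by rwa [take_append_drop])

noncomputable def stirlingFromEquiv (han : a ≤ n) (hsa : s a ≠ 0) :
    Fin (numSlots s n a) × {w // IsStirlingFrom s n (a + 1) w} ≃ {w // IsStirlingFrom s n a w} :=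
  Equiv.ofBijective (fun pw => ⟨insertBlock a (s a) pw.2 pw.1, pw.2.2.insertBlock han pw.1⟩)
    ⟨by
      rintro ⟨p, w, hw⟩ ⟨p', w', hw'⟩ h
      simp only [Subtype.mk.injEq] at h
      obtain rfl : w = w' := by
        rw [← filter_ne_insertBlock hw.notMem (s a) p, h, filter_ne_insertBlock hw'.notMem]
      have hp := congrArg (idxOf a) h
      have := hw.length_add_one
      rw [idxOf_insertBlock hw.notMem (by omega) hsa, idxOf_insertBlock hw.notMem (by omega) hsa,
        Fin.val_inj] at hp
      rw [hp],
    by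
      rintro ⟨w, hw⟩
      obtain ⟨u, v, hu, hv, rfl⟩ := hw.exists_eq_append_replicate_append han
      have huv := (isStirlingFrom_append_replicate_append_iff han hu hv).1 hw
      have := huv.length_add_one
      rw [length_append] at this
      exact ⟨(⟨u.length, by omega⟩, ⟨u ++ v, huv⟩), by simp [insertBlock]⟩⟩

end Words

section Trees

mutual
  def numLeaves : PTree → ℕ
    | .leaf => 1
    | .node _ cs => numLeavesList cs
  def numLeavesList : List PTree → ℕ
    | [] => 0
    | t :: ts => numLeaves t + numLeavesList ts
end

mutual
  /-- `graft a k t p` replaces the `p`-th leaf of `t` (counted from the left, from `0`) by a node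
  labelled `a` with `k` leaves as children. -/
  def graft (a k : ℕ) : PTree → ℕ → PTree
    | .leaf, _ => .node a (replicate k .leaf)
    | .node i cs, p => .node i (graftList a k cs p)
  def graftList (a k : ℕ) : List PTree → ℕ → List PTree
    | [], _ => []
    | t :: ts, p =>
        if p < numLeaves t then graft a k t p :: ts else t :: graftList a k ts (p - numLeaves t)
end

mutual
  def prune (a : ℕ) : PTree → PTree
    | .leaf => .leaf
    | .node i cs => if i = a then .leaf else .node i (pruneList a cs)
  def pruneList (a : ℕ) : List PTree → List PTree
    | [] => []
    | t :: ts => prune a t :: pruneList a ts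
end

mutual
  /-- The index of the leaf of `prune a t` that replaced the node labelled `a`. -/
  def prunePos (a : ℕ) : PTree → ℕ
    | .leaf => 0
    | .node i cs => if i = a then 0 else prunePosList a cs
  def prunePosList (a : ℕ) : List PTree → ℕ
    | [] => 0
    | t :: ts => if a ∈ labels t then prunePos a t else numLeaves t + prunePosList a ts
end

variable {s : ℕ → ℕ} {a k : ℕ}

theorem eq_leaf_of_labels_eq_nil {t : PTree} (h : labels t = []) : t = .leaf := by
  cases t with
  | leaf => rfl
  | node i cs => simp [labels] at h

theorem eq_replicate_leaf_of_labelsList_eq_nil {cs : List PTree} (h : labelsList cs = []) :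
    cs = replicate cs.length .leaf := by
  induction cs with
  | nil => rfl
  | cons t ts ih =>
    rw [labelsList, append_eq_nil_iff] at h
    rw [eq_leaf_of_labels_eq_nil h.1, length_cons, replicate_succ, ← ih h.2]

theorem labelsList_replicate_leaf (k : ℕ) : labelsList (replicate k .leaf) = [] := by
  induction k with
  | zero => rfl
  | succ k ih => rw [replicate_succ, labelsList, ih]; rfl

theorem isSDecList_replicate_leaf (k : ℕ) : IsSDecList s (replicate k .leaf) := by
  induction k with
  | zero => trivial
  | succ k ih => exact ⟨trivial, ih⟩

theorem length_graftList (cs : List PTree) (p : ℕ) : (graftList a k cs p).length = cs.length := by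
  induction cs generalizing p with
  | nil => rfl
  | cons t ts ih =>
    rw [graftList]
    split_ifs <;> simp [ih]

theorem length_pruneList (cs : List PTree) : (pruneList a cs).length = cs.length := by
  induction cs with
  | nil => rfl
  | cons t ts ih => simp [pruneList, ih]

mutual
  theorem prune_of_notMem : ∀ t : PTree, a ∉ labels t → prune a t = t
    | .leaf, _ => rfl
    | .node i cs, h => by
        simp only [labels, mem_cons, not_or] at h
        rw [prune, if_neg (Ne.symm h.1), pruneList_of_notMem cs h.2]
  theorem pruneList_of_notMem : ∀ ts : List PTree, a ∉ labelsList ts → pruneList a ts = ts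
    | [], _ => rfl
    | t :: ts, h => by
        simp only [labelsList, mem_append, not_or] at h
        rw [pruneList, prune_of_notMem t h.1, pruneList_of_notMem ts h.2]
end

mutual
  theorem numLeaves_eq_of_isSDecAux : ∀ t : PTree, IsSDecAux s t →
      numLeaves t = 1 + ((labels t).map s).sum
    | .leaf, _ => rfl
    | .node i cs, h => by
        rw [numLeaves, labels, numLeavesList_eq_of_isSDecList cs h.2.2, h.1]
        simp
        omega
  theorem numLeavesList_eq_of_isSDecList : ∀ ts : List PTree, IsSDecList s ts →
      numLeavesList ts = ts.length + ((labelsList ts).map s).sum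
    | [], _ => rfl
    | t :: ts, h => by
        rw [numLeavesList, labelsList, numLeaves_eq_of_isSDecAux t h.1,
          numLeavesList_eq_of_isSDecList ts h.2]
        simp
        omega
end

mutual
  theorem labels_graft_perm : ∀ (t : PTree) (p : ℕ), p < numLeaves t →
      (labels (graft a k t p)).Perm (a :: labels t)
    | .leaf, p, _ => by simp [graft, labels, labelsList_replicate_leaf]
    | .node i cs, p, hp => by
        rw [graft, labels, labels]
        exact ((labelsList_graftList_perm cs p hp).cons i).trans (.swap a i _)
  theorem labelsList_graftList_perm : ∀ (ts : List PTree) (p : ℕ), p < numLeavesList ts →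
      (labelsList (graftList a k ts p)).Perm (a :: labelsList ts)
    | [], p, hp => absurd hp (Nat.not_lt_zero p)
    | t :: ts, p, hp => by
        rw [numLeavesList] at hp
        rw [graftList, labelsList]
        split_ifs with h
        · exact (labels_graft_perm t p h).append_right _
        · exact ((labelsList_graftList_perm ts _ (by omega)).append_left _).trans perm_middle
end

mutual
  theorem IsSDecAux.graft : ∀ {t : PTree} {p : ℕ}, IsSDecAux s t → (∀ j ∈ labels t, a < j) →
      p < numLeaves t → IsSDecAux s (graft a (s a + 1) t p)
    | .leaf, _, _, _, _ =>
        ⟨length_replicate, by simp [labelsList_replicate_leaf], isSDecList_replicate_leaf _⟩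
    | .node i cs, p, h, ha, hp => by
        simp only [labels, mem_cons, forall_eq_or_imp] at ha
        refine ⟨by rw [length_graftList, h.1], fun j hj => ?_, IsSDecList.graftList h.2.2 ha.2 hp⟩
        rcases mem_cons.1 ((labelsList_graftList_perm cs p hp).subset hj) with rfl | hj
        exacts [ha.1, h.2.1 j hj]
  theorem IsSDecList.graftList : ∀ {ts : List PTree} {p : ℕ}, IsSDecList s ts →
      (∀ j ∈ labelsList ts, a < j) → p < numLeavesList ts →
      IsSDecList s (graftList a (s a + 1) ts p)
    | [], _, _, _, _ => trivial
    | t :: ts, p, h, ha, hp => by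
        simp only [labelsList, mem_append] at ha
        rw [numLeavesList] at hp
        rw [SPermutahedron.graftList]
        split_ifs with hpt
        · exact ⟨h.1.graft (fun j hj => ha j (.inl hj)) hpt, h.2⟩
        · exact ⟨h.1, h.2.graftList (fun j hj => ha j (.inr hj)) (by omega)⟩
end

mutual
  theorem prune_graft : ∀ (t : PTree) (p : ℕ), a ∉ labels t → p < numLeaves t →
      prune a (graft a k t p) = t
    | .leaf, _, _, _ => by rw [graft, prune, if_pos rfl]
    | .node i cs, p, h, hp => by
        simp only [labels, mem_cons, not_or] at h
        rw [graft, prune, if_neg (Ne.symm h.1), pruneList_graftList cs p h.2 hp]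
  theorem pruneList_graftList : ∀ (ts : List PTree) (p : ℕ), a ∉ labelsList ts →
      p < numLeavesList ts → pruneList a (graftList a k ts p) = ts
    | [], p, _, hp => absurd hp (Nat.not_lt_zero p)
    | t :: ts, p, h, hp => by
        simp only [labelsList, mem_append, not_or] at h
        rw [numLeavesList] at hp
        rw [graftList]
        split_ifs with hpt
        · rw [pruneList, prune_graft t p h.1 hpt, pruneList_of_notMem ts h.2]
        · rw [pruneList, prune_of_notMem t h.1, pruneList_graftList ts _ h.2 (by omega)]
end

mutual
  theorem prunePos_graft : ∀ (t : PTree) (p : ℕ), a ∉ labels t → p < numLeaves t →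
      prunePos a (graft a k t p) = p
    | .leaf, p, _, hp => by
        rw [graft, prunePos, if_pos rfl]
        rw [numLeaves] at hp
        omega
    | .node i cs, p, h, hp => by
        simp only [labels, mem_cons, not_or] at h
        rw [graft, prunePos, if_neg (Ne.symm h.1), prunePosList_graftList cs p h.2 hp]
  theorem prunePosList_graftList : ∀ (ts : List PTree) (p : ℕ), a ∉ labelsList ts →
      p < numLeavesList ts → prunePosList a (graftList a k ts p) = p
    | [], p, _, hp => absurd hp (Nat.not_lt_zero p)
    | t :: ts, p, h, hp => by
        simp only [labelsList, mem_append, not_or] at h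
        rw [numLeavesList] at hp
        rw [graftList]
        split_ifs with hpt
        · rw [prunePosList, if_pos ((labels_graft_perm t p hpt).mem_iff.2 mem_cons_self),
            prunePos_graft t p h.1 hpt]
        · rw [prunePosList, if_neg h.1, prunePosList_graftList ts _ h.2 (by omega)]
          omega
end

mutual
  theorem labels_prune_sublist : ∀ t : PTree, labels (prune a t) <+ labels t
    | .leaf => .refl _
    | .node i cs => by
        rw [prune]
        split_ifs
        · exact nil_sublist _
        · exact (labelsList_pruneList_sublist cs).cons_cons i
  theorem labelsList_pruneList_sublist : ∀ ts : List PTree,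
      labelsList (pruneList a ts) <+ labelsList ts
    | [] => .refl _
    | t :: ts => (labels_prune_sublist t).append (labelsList_pruneList_sublist ts)
end

mutual
  theorem IsSDecAux.prune : ∀ {t : PTree}, IsSDecAux s t → IsSDecAux s (prune a t)
    | .leaf, _ => trivial
    | .node i cs, h => by
        rw [SPermutahedron.prune]
        split_ifs
        · trivial
        · exact ⟨by rw [length_pruneList, h.1],
            fun j hj => h.2.1 j ((labelsList_pruneList_sublist cs).subset hj), h.2.2.pruneList⟩
  theorem IsSDecList.pruneList : ∀ {ts : List PTree}, IsSDecList s ts →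
      IsSDecList s (pruneList a ts)
    | [], _ => trivial
    | _ :: _, h => ⟨h.1.prune, h.2.pruneList⟩
end

mutual
  theorem graft_prune : ∀ t : PTree, IsSDecAux s t → (∀ j ∈ labels t, a ≤ j) → (labels t).Nodup →
      a ∈ labels t →
      graft a (s a + 1) (prune a t) (prunePos a t) = t ∧ prunePos a t < numLeaves (prune a t)
    | .leaf, _, _, _, ha => absurd ha not_mem_nil
    | .node i cs, h, hmin, hnd, ha => by
        simp only [labels, mem_cons, forall_eq_or_imp, nodup_cons] at hmin hnd ha
        by_cases hia : i = a
        · subst hia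
          -- `i` is minimal, so all its children are leaves
          have hnil : labelsList cs = [] := eq_nil_iff_forall_not_mem.2 fun j hj => by
            have := h.2.1 j hj
            have := hmin.2 j hj
            omega
          rw [prune, if_pos rfl, prunePos, if_pos rfl, graft, ← h.1,
            ← eq_replicate_leaf_of_labelsList_eq_nil hnil]
          exact ⟨rfl, Nat.one_pos⟩
        · obtain ⟨hgraft, hpos⟩ :=
            graftList_pruneList cs h.2.2 hmin.2 hnd.2 (ha.resolve_left (Ne.symm hia))
          rw [prune, if_neg hia, prunePos, if_neg hia, graft, hgraft]
          exact ⟨rfl, hpos⟩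
  theorem graftList_pruneList : ∀ ts : List PTree, IsSDecList s ts →
      (∀ j ∈ labelsList ts, a ≤ j) → (labelsList ts).Nodup → a ∈ labelsList ts →
      graftList a (s a + 1) (pruneList a ts) (prunePosList a ts) = ts ∧
        prunePosList a ts < numLeavesList (pruneList a ts)
    | [], _, _, _, ha => absurd ha not_mem_nil
    | t :: ts, h, hmin, hnd, ha => by
        simp only [labelsList, mem_append] at hmin ha
        rw [labelsList, nodup_append] at hnd
        by_cases hat : a ∈ labels t
        · have hats : a ∉ labelsList ts := fun h' => hnd.2.2 a hat a h' rfl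
          obtain ⟨hgraft, hpos⟩ := graft_prune t h.1 (fun j hj => hmin j (.inl hj)) hnd.1 hat
          rw [pruneList, prunePosList, if_pos hat, pruneList_of_notMem ts hats, graftList,
            if_pos hpos, hgraft, numLeavesList]
          exact ⟨rfl, by omega⟩
        · obtain ⟨hgraft, hpos⟩ := graftList_pruneList ts h.2 (fun j hj => hmin j (.inr hj))
            hnd.2.1 (ha.resolve_left hat)
          rw [pruneList, prunePosList, if_neg hat, prune_of_notMem t hat, graftList,
            if_neg (by omega), Nat.add_sub_cancel_left, hgraft, numLeavesList]
          exact ⟨rfl, by omega⟩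
end

/-- `s`-decreasing trees labelled by `a, …, n`; `IsSDecTree s n` is the case `a = 1`. -/
def IsSDecTreeFrom (s : ℕ → ℕ) (n a : ℕ) (T : PTree) : Prop :=
  IsSDecAux s T ∧ (labels T).Perm (range' a (n + 1 - a))

variable {n : ℕ} {T : PTree}

theorem range'_eq_cons (han : a ≤ n) :
    range' a (n + 1 - a) = a :: range' (a + 1) (n + 1 - (a + 1)) := by
  rw [show n + 1 - a = n + 1 - (a + 1) + 1 by omega, range'_succ]

theorem isSDecTreeFrom_succ_iff : IsSDecTreeFrom s n (n + 1) T ↔ T = .leaf := by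
  refine ⟨fun h => eq_leaf_of_labels_eq_nil ?_, fun h => ⟨h ▸ trivial, by simp [h, labels]⟩⟩
  simpa using h.2

theorem IsSDecTreeFrom.numLeaves_eq (h : IsSDecTreeFrom s n (a + 1) T) :
    numLeaves T = numSlots s n a := by
  rw [numLeaves_eq_of_isSDecAux T h.1, (h.2.map s).sum_eq, numSlots, Finset.sum_eq_multiset_sum,
    Nat.Icc_eq_range']
  rfl

theorem IsSDecTreeFrom.lt_of_mem (h : IsSDecTreeFrom s n (a + 1) T) {j : ℕ} (hj : j ∈ labels T) :
    a < j :=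
  (mem_range'_1.1 (h.2.subset hj)).1

theorem IsSDecTreeFrom.graft (h : IsSDecTreeFrom s n (a + 1) T) (han : a ≤ n) {p : ℕ}
    (hp : p < numLeaves T) : IsSDecTreeFrom s n a (graft a (s a + 1) T p) := by
  refine ⟨h.1.graft (fun j => h.lt_of_mem) hp, ?_⟩
  rw [range'_eq_cons han]
  exact (labels_graft_perm T p hp).trans (h.2.cons a)

noncomputable def sDecTreeFromEquiv (han : a ≤ n) :
    Fin (numSlots s n a) × {T // IsSDecTreeFrom s n (a + 1) T} ≃ {T // IsSDecTreeFrom s n a T} :=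
  Equiv.ofBijective
    (fun pT => ⟨graft a (s a + 1) pT.2 pT.1,
      pT.2.2.graft han (pT.1.2.trans_eq pT.2.2.numLeaves_eq.symm)⟩)
    ⟨by
      rintro ⟨p, T, hT⟩ ⟨p', T', hT'⟩ h
      simp only [Subtype.mk.injEq] at h
      have hp := p.2.trans_eq hT.numLeaves_eq.symm
      have hp' := p'.2.trans_eq hT'.numLeaves_eq.symm
      have ha : a ∉ labels T := fun h => (hT.lt_of_mem h).false
      have ha' : a ∉ labels T' := fun h => (hT'.lt_of_mem h).false
      obtain rfl : T = T' := by
        rw [← prune_graft T p ha hp, h, prune_graft T' p' ha' hp']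
      have := congrArg (prunePos a) h
      rw [prunePos_graft T p ha hp, prunePos_graft T p' ha hp'] at this
      rw [Fin.ext this],
    by
      rintro ⟨T, hT⟩
      have hperm := hT.2
      rw [range'_eq_cons han] at hperm
      obtain ⟨hgraft, hpos⟩ := graft_prune T hT.1
        (fun j hj => (mem_range'_1.1 (hT.2.subset hj)).1) (hT.2.nodup_iff.2 nodup_range')
        (hperm.mem_iff.2 mem_cons_self)
      have hT' : IsSDecTreeFrom s n (a + 1) (prune a T) := by
        refine ⟨hT.1.prune, (perm_cons a).1 ?_⟩
        exact (labels_graft_perm _ _ hpos).symm.trans (hgraft.symm ▸ hperm)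
      exact ⟨(⟨prunePos a T, hpos.trans_eq hT'.numLeaves_eq⟩, ⟨prune a T, hT'⟩),
        Subtype.ext hgraft⟩⟩

end Trees

variable {s : ℕ → ℕ} {n : ℕ}

theorem nonempty_stirling_equiv_fin (hs : ∀ i, 1 ≤ i → i ≤ n → 1 ≤ s i) :
    Nonempty ({w // IsStirling s n w} ≃ Fin (∏ i ∈ Finset.Ico 1 (n + 1), numSlots s n i)) :=
  nonempty_equiv_fin_prod_Ico (α := fun a => {w // IsStirlingFrom s n a w}) _ (by omega)
    ((Equiv.subtypeEquivRight fun _ => isStirlingFrom_succ_iff).trans (Equiv.ofUnique _ _))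
    fun a ha haN => ⟨stirlingFromEquiv (by omega) (Nat.one_le_iff_ne_zero.1 (hs a ha (by omega)))⟩

theorem nonempty_sDecTree_equiv_fin :
    Nonempty ({T // IsSDecTree s n T} ≃ Fin (∏ i ∈ Finset.Ico 1 (n + 1), numSlots s n i)) :=
  nonempty_equiv_fin_prod_Ico (α := fun a => {T // IsSDecTreeFrom s n a T}) _ (by omega)
    ((Equiv.subtypeEquivRight fun _ => isSDecTreeFrom_succ_iff).trans (Equiv.ofUnique _ _))
    fun a _ haN => ⟨sDecTreeFromEquiv (by omega)⟩

theorem prod_numSlots_eq :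
    ∏ i ∈ Finset.Ico 1 (n + 1), numSlots s n i =
      ∏ i ∈ Finset.Icc 1 (n - 1), (1 + ∑ r ∈ Finset.Icc (n - i + 1) n, s r) := by
  have hIcc : Finset.Icc 1 (n - 1) = Finset.Ico 1 n := by
    ext; simp only [Finset.mem_Icc, Finset.mem_Ico]; omega
  have hreflect := Finset.prod_Ico_reflect (numSlots s n) 1 (Nat.le_succ n)
  rw [Nat.add_sub_cancel_left, Nat.add_sub_cancel] at hreflect
  rw [hIcc]
  change _ = ∏ i ∈ Finset.Ico 1 n, numSlots s n (n - i)
  rw [hreflect]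
  rcases Nat.eq_zero_or_pos n with rfl | hn
  · rfl
  · rw [Finset.prod_Ico_succ_top hn]
    simp [numSlots]

/-- For a composition `s` of positive integers, the set of
Stirling `s`-permutations is in bijection with the set of `s`-decreasing trees;
in particular their number is `∏_{i=1}^{n-1} (1 + s_{n-i+1} + ⋯ + s_n)`. -/
theorem stirling_equiv_trees_and_card (n : ℕ) (s : ℕ → ℕ)
    (hs : ∀ i, 1 ≤ i → i ≤ n → 1 ≤ s i) :
    Nonempty ({w : List ℕ // IsStirling s n w} ≃ {T : PTree // IsSDecTree s n T}) ∧
    Nat.card {w : List ℕ // IsStirling s n w} =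
      ∏ i ∈ Finset.Icc 1 (n - 1), (1 + ∑ r ∈ Finset.Icc (n - i + 1) n, s r) := by
  obtain ⟨eW⟩ := nonempty_stirling_equiv_fin hs
  obtain ⟨eT⟩ := nonempty_sDecTree_equiv_fin (s := s) (n := n)
  exact ⟨⟨eW.trans eT.symm⟩, (Nat.card_eq_of_equiv_fin eW).trans prod_numSlots_eq⟩

end SPermutahedron
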